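/- The function (ρ, p) ↦ -ρ·s(ρ,p) = -(ρ/(γ-1))·log(p/ρ^γ) is convex on the set {(ρ,p) : ρ > 0, p > 0}, where γ > 1. -/

import Mathlib

/-!
Writing `log (p / ρ ^ γ) = log p - γ log ρ` splits the negative entropy density as
`ρ log ρ + (γ - 1)⁻¹ ρ log (ρ / p)`. The first term is the convex function `t log t` of `ρ`
alone, and the second is the perspective `p φ(ρ / p)` of the convex function `φ(t) = t log t`,
which is jointly convex.
-/

open Real Set

section Perspective

variable {E : Type*} [AddCommGroup E] [Module ℝ E]

lemma inv_smul_add_eq_add_inv_smul {t₁ t₂ : ℝ} (h₁ : t₁ ≠ 0) (h₂ : t₂ ≠ 0) (a b : ℝ)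
    (x₁ x₂ : E) :
    (a * t₁ + b * t₂)⁻¹ • (a • x₁ + b • x₂) =
      (a * t₁ / (a * t₁ + b * t₂)) • (t₁⁻¹ • x₁) + (b * t₂ / (a * t₁ + b * t₂)) • (t₂⁻¹ • x₂) := by
  simp only [smul_add, smul_smul]
  congr 2 <;> field_simp

lemma div_add_div_self_add {u v : ℝ} (h : u + v ≠ 0) : u / (u + v) + v / (u + v) = 1 := by
  rw [← add_div, div_self h]

theorem ConvexOn.perspective {s : Set E} {f : E → ℝ} (hf : ConvexOn ℝ s f) :
    ConvexOn ℝ {z : E × ℝ | 0 < z.2 ∧ z.2⁻¹ • z.1 ∈ s} (fun z => z.2 * f (z.2⁻¹ • z.1)) := by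
  have hpos : ∀ ⦃x y : E × ℝ⦄, 0 < x.2 → 0 < y.2 → ∀ ⦃a b : ℝ⦄, 0 ≤ a → 0 ≤ b → a + b = 1 →
      0 < a * x.2 + b * y.2 := fun _ _ hx hy _ _ ha hb hab => convex_Ioi (0 : ℝ) hx hy ha hb hab
  -- With `t = a t₁ + b t₂`, the rescaled combination is the combination of the rescaled
  -- points with weights `a t₁ / t` and `b t₂ / t`; convexity of `f` there, times `t`, is the claim.
  refine ⟨?_, ?_⟩
  · rintro x ⟨hx, hxs⟩ y ⟨hy, hys⟩ a b ha hb hab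
    have ht := hpos hx hy ha hb hab
    refine ⟨ht, ?_⟩
    simp only [Prod.fst_add, Prod.snd_add, Prod.smul_fst, Prod.smul_snd, smul_eq_mul]
    rw [inv_smul_add_eq_add_inv_smul hx.ne' hy.ne']
    exact hf.1 hxs hys (by positivity) (by positivity) (div_add_div_self_add ht.ne')
  · rintro x ⟨hx, hxs⟩ y ⟨hy, hys⟩ a b ha hb hab
    have ht := hpos hx hy ha hb hab
    simp only [Prod.fst_add, Prod.snd_add, Prod.smul_fst, Prod.smul_snd, smul_eq_mul]
    rw [inv_smul_add_eq_add_inv_smul hx.ne' hy.ne']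
    have hcomb := hf.2 hxs hys (by positivity : 0 ≤ a * x.2 / (a * x.2 + b * y.2))
      (by positivity : 0 ≤ b * y.2 / (a * x.2 + b * y.2)) (div_add_div_self_add ht.ne')
    calc (a * x.2 + b * y.2) * f _
        ≤ (a * x.2 + b * y.2) * ((a * x.2 / (a * x.2 + b * y.2)) • f (x.2⁻¹ • x.1)
            + (b * y.2 / (a * x.2 + b * y.2)) • f (y.2⁻¹ • y.1)) :=
          mul_le_mul_of_nonneg_left hcomb ht.le
      _ = a * (x.2 * f (x.2⁻¹ • x.1)) + b * (y.2 * f (y.2⁻¹ • y.1)) := by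
          simp only [smul_eq_mul]
          field_simp

end Perspective

lemma convex_positive_quadrant : Convex ℝ {x : ℝ × ℝ | 0 < x.1 ∧ 0 < x.2} :=
  (convex_Ioi 0).prod (convex_Ioi 0)

lemma convexOn_fst_mul_log_fst :
    ConvexOn ℝ {x : ℝ × ℝ | 0 < x.1 ∧ 0 < x.2} (fun x => x.1 * log x.1) :=
  (convexOn_mul_log.comp_linearMap (LinearMap.fst ℝ ℝ ℝ)).subset (fun _ hx => hx.1.le)
    convex_positive_quadrant

lemma convexOn_fst_mul_log_fst_div_snd :
    ConvexOn ℝ {x : ℝ × ℝ | 0 < x.1 ∧ 0 < x.2} (fun x => x.1 * log (x.1 / x.2)) := by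
  refine (convexOn_mul_log.perspective.subset (fun x hx => ⟨hx.2, ?_⟩)
    convex_positive_quadrant).congr fun x hx => ?_
  · exact (smul_pos (inv_pos.2 hx.2) hx.1).le
  · simp only [smul_eq_mul]
    rw [inv_mul_eq_div, ← mul_assoc, mul_div_cancel₀ _ hx.2.ne']

lemma neg_div_mul_log_div_rpow {ρ p γ : ℝ} (hρ : 0 < ρ) (hp : 0 < p) (hγ : γ ≠ 1) :
    -(ρ / (γ - 1)) * log (p / ρ ^ γ) = ρ * log ρ + (γ - 1)⁻¹ * (ρ * log (ρ / p)) := by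
  have : γ - 1 ≠ 0 := sub_ne_zero.2 hγ
  rw [log_div hp.ne' (rpow_pos_of_pos hρ γ).ne', log_rpow hρ, log_div hρ.ne' hp.ne']
  field_simp
  ring

theorem neg_entropy_convex (γ : ℝ) (hγ : 1 < γ) :
    ConvexOn ℝ {x : ℝ × ℝ | 0 < x.1 ∧ 0 < x.2}
      (fun x => -(x.1 / (γ - 1)) * Real.log (x.2 / x.1 ^ γ)) :=
  (convexOn_fst_mul_log_fst.add
    (convexOn_fst_mul_log_fst_div_snd.smul (inv_nonneg.2 (sub_pos.2 hγ).le))).congr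
    fun _ hx => (neg_div_mul_log_div_rpow hx.1 hx.2 hγ.ne').symm
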